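/- Let Q, U, W be nonempty finite sets, f : Q × U × W → Q, and σ : Q × U × W → ℝ. Suppose there exists a state feedback law φ : Q → U such that for every initial state q(0) ∈ Q and every input sequence w : ℕ → W, the closed-loop trajectory q(t+1) = f(q(t), φ(q(t)), w(t)) satisfies inf_{T ≥ 0} Σ_{t=0}^{T} σ(q(t), φ(q(t)), w(t)) > −∞. Then the value iteration sequence J₀ = 0, J_{k+1} = max{0, 𝕋(J_k)} (pointwise maximum with the zero function) converges pointwise on Q. -/

import Mathlib

/-!
Under the feedback `φ` every closed-loop cost sum is bounded below, and the bound is in fact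
uniform: cutting a cycle out of a trajectory never increases its cost (a cycle of negative cost,
repeated forever, would make the sums unbounded below), and by pigeonhole a cycle-free stretch has
at most `card Q` steps. Hence the available storage `g q = sup_{w,T} -∑_{t<T} σ` is finite and
nonnegative, and the feedback `φ` witnesses `𝕋 g ≤ g`. Since `𝕋` is monotone, the value iterates
increase and stay below `g`, so they converge.
-/

open Finset Filter

/-- Dynamic programming operator:
`𝕋(J)(q) = min_{u ∈ U} max_{w ∈ W} ( -σ(q,u,w) + J(f(q,u,w)) )`. -/
noncomputable def dpOp {Q U W : Type*} [Fintype U] [Nonempty U] [Fintype W] [Nonempty W]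
    (f : Q × U × W → Q) (σ : Q × U × W → ℝ) (J : Q → ℝ) : Q → ℝ :=
  fun q => univ.inf' univ_nonempty fun u : U =>
    univ.sup' univ_nonempty fun w : W => -σ (q, u, w) + J (f (q, u, w))

/-- Value iteration sequence: `J₀ = 0`, `J_{k+1} = max {0, 𝕋(J_k)}` (pointwise). -/
noncomputable def valIter {Q U W : Type*} [Fintype U] [Nonempty U] [Fintype W] [Nonempty W]
    (f : Q × U × W → Q) (σ : Q × U × W → ℝ) : ℕ → Q → ℝ
  | 0 => fun _ => 0
  | k + 1 => fun q => max 0 (dpOp f σ (valIter f σ k) q)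

namespace ClosedLoop

variable {Q W : Type*} (step : Q → W → Q) (cost : Q → W → ℝ)

def traj (q : Q) (w : ℕ → W) : ℕ → Q
  | 0 => q
  | t + 1 => step (traj q w t) (w t)

def costSum (q : Q) (w : ℕ → W) (T : ℕ) : ℝ :=
  ∑ t ∈ range T, cost (traj step q w t) (w t)

def splice (i : ℕ) (w₁ w₂ : ℕ → W) : ℕ → W :=
  fun t => if t < i then w₁ t else w₂ (t - i)

lemma traj_add (q : Q) (w : ℕ → W) (m n : ℕ) :
    traj step q w (m + n) = traj step (traj step q w m) (fun t => w (m + t)) n := by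
  induction n with
  | zero => rfl
  | succ n ih => rw [← add_assoc, traj, ih, traj]

lemma traj_congr {w w' : ℕ → W} {T : ℕ} (h : ∀ t < T, w t = w' t) (q : Q) :
    ∀ t ≤ T, traj step q w t = traj step q w' t
  | 0, _ => rfl
  | t + 1, ht => by rw [traj, traj, traj_congr h q t (by omega), h t (by omega)]

lemma costSum_add (q : Q) (w : ℕ → W) (m n : ℕ) :
    costSum step cost q w (m + n) =
      costSum step cost q w m + costSum step cost (traj step q w m) (fun t => w (m + t)) n := by
  simp only [costSum, sum_range_add, traj_add]

lemma costSum_congr {w w' : ℕ → W} {T : ℕ} (h : ∀ t < T, w t = w' t) (q : Q) :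
    costSum step cost q w T = costSum step cost q w' T :=
  sum_congr rfl fun t ht => by
    rw [mem_range] at ht
    rw [traj_congr step h q t ht.le, h t ht]

lemma costSum_splice (i n : ℕ) (q : Q) (w₁ w₂ : ℕ → W) :
    costSum step cost q (splice i w₁ w₂) (i + n) =
      costSum step cost q w₁ i + costSum step cost (traj step q w₁ i) w₂ n := by
  have hpre : ∀ t < i, splice i w₁ w₂ t = w₁ t := fun t ht => if_pos ht
  have hpost : (fun t => splice i w₁ w₂ (i + t)) = w₂ := by
    funext t
    simp [splice]
  rw [costSum_add, costSum_congr step cost hpre, traj_congr step hpre q i le_rfl, hpost]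

/-- Repeating a cycle forever gives a trajectory whose cost sums are `k` times the cycle cost,
so a negative cycle contradicts boundedness from below. -/
lemma costSum_nonneg_of_traj_eq_self
    (hbdd : ∀ q w, BddBelow (Set.range (costSum step cost q w)))
    {p : Q} {w : ℕ → W} {n : ℕ} (hcyc : traj step p w n = p) :
    0 ≤ costSum step cost p w n := by
  set w' : ℕ → W := fun t => w (t % n)
  have hw' : ∀ t < n, w' t = w t := fun t ht => congrArg w (Nat.mod_eq_of_lt ht)
  have hshift (k : ℕ) : (fun t => w' (k * n + t)) = w' := by
    funext t
    simp only [w', Nat.mul_comm k n, Nat.mul_add_mod]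
  have htraj (k : ℕ) : traj step p w' (k * n) = p := by
    induction k with
    | zero => rw [zero_mul]; rfl
    | succ k ih =>
      rw [Nat.succ_mul, traj_add, ih, hshift, traj_congr step hw' p n le_rfl, hcyc]
  have hsum (k : ℕ) : costSum step cost p w' (k * n) = k * costSum step cost p w n := by
    induction k with
    | zero => simp [costSum]
    | succ k ih =>
      rw [Nat.succ_mul, costSum_add, ih, htraj, hshift, costSum_congr step cost hw']
      push_cast
      ring
  obtain ⟨C, hC⟩ := hbdd p w'
  by_contra hneg
  rw [not_le] at hneg
  obtain ⟨k, hk⟩ := exists_nat_gt (C / costSum step cost p w n)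
  rw [div_lt_iff_of_neg hneg] at hk
  have := hC ⟨k * n, rfl⟩
  rw [hsum] at this
  linarith

lemma exists_traj_eq [Fintype Q] (q : Q) (w : ℕ → W) :
    ∃ i j, i < j ∧ j ≤ Fintype.card Q ∧ traj step q w i = traj step q w j := by
  obtain ⟨a, b, hab, heq⟩ := Fintype.exists_ne_map_eq_of_card_lt
    (fun k : Fin (Fintype.card Q + 1) => traj step q w k) (by simp)
  rcases lt_or_gt_of_ne hab with h | h
  · exact ⟨a, b, h, Nat.lt_succ_iff.mp b.isLt, heq⟩
  · exact ⟨b, a, h, Nat.lt_succ_iff.mp a.isLt, heq.symm⟩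

lemma costSum_splice_le_of_traj_eq
    (hbdd : ∀ q w, BddBelow (Set.range (costSum step cost q w)))
    {q : Q} {w : ℕ → W} {i j T : ℕ} (hij : i < j) (hjT : j ≤ T)
    (heq : traj step q w i = traj step q w j) :
    costSum step cost q (splice i w fun t => w (j + t)) (i + (T - j)) ≤
      costSum step cost q w T := by
  set p := traj step q w i
  set wi : ℕ → W := fun t => w (i + t)
  have hcyc : traj step p wi (j - i) = p := by
    rw [← traj_add, Nat.add_sub_cancel' hij.le, heq]
  have hwj : (fun t => wi (j - i + t)) = fun t => w (j + t) := by
    funext t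
    simp only [wi]
    congr 1
    omega
  have hsplit : costSum step cost q w T = costSum step cost q w i +
      (costSum step cost p wi (j - i) + costSum step cost p (fun t => w (j + t)) (T - j)) := by
    calc costSum step cost q w T = costSum step cost q w (i + (j - i + (T - j))) := by
          congr 1; omega
      _ = _ := by rw [costSum_add, costSum_add, hcyc, hwj]
  rw [costSum_splice, hsplit]
  linarith [costSum_nonneg_of_traj_eq_self step cost hbdd hcyc]

theorem exists_forall_le_costSum [Fintype Q] [Finite W]
    (hbdd : ∀ q w, BddBelow (Set.range (costSum step cost q w))) :
    ∃ B, ∀ q w T, B ≤ costSum step cost q w T := by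
  obtain ⟨m, hm⟩ := (Set.finite_range fun x : Q × W => cost x.1 x.2).bddBelow
  refine ⟨Fintype.card Q * min m 0, fun q w T => ?_⟩
  induction T using Nat.strong_induction_on generalizing w with
  | _ T ih =>
    rcases le_or_gt T (Fintype.card Q) with hT | hT
    · calc (Fintype.card Q : ℝ) * min m 0 ≤ T * min m 0 :=
            mul_le_mul_of_nonpos_right (by exact_mod_cast hT) (min_le_right _ _)
        _ = #(range T) • min m 0 := by simp
        _ ≤ costSum step cost q w T := card_nsmul_le_sum _ _ _ fun t _ =>
            (min_le_left _ _).trans (hm ⟨(_, _), rfl⟩)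
    · obtain ⟨i, j, hij, hjQ, heq⟩ := exists_traj_eq step q w
      exact (ih _ (by omega) _).trans
        (costSum_splice_le_of_traj_eq step cost hbdd hij (by omega) heq)

noncomputable def storage (q : Q) : ℝ :=
  ⨆ x : (ℕ → W) × ℕ, -costSum step cost q x.1 x.2

variable {step cost} {B : ℝ} (hB : ∀ q w T, B ≤ costSum step cost q w T)
include hB

lemma neg_costSum_le_storage (q : Q) (w : ℕ → W) (T : ℕ) :
    -costSum step cost q w T ≤ storage step cost q :=
  le_ciSup (f := fun x : (ℕ → W) × ℕ => -costSum step cost q x.1 x.2)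
    ⟨-B, Set.forall_mem_range.mpr fun x => neg_le_neg (hB q x.1 x.2)⟩ (w, T)

lemma storage_nonneg [Nonempty W] (q : Q) : 0 ≤ storage step cost q := by
  simpa [costSum] using neg_costSum_le_storage hB q (Classical.arbitrary _) 0

lemma storage_step_le [Nonempty W] (q : Q) (a : W) :
    storage step cost (step q a) ≤ storage step cost q + cost q a := by
  refine ciSup_le fun x => ?_
  have h := costSum_splice step cost 1 x.2 q (fun _ => a) x.1
  have h1 : costSum step cost q (fun _ => a) 1 = cost q a := by simp [costSum, traj]
  have h2 : traj step q (fun _ => a) 1 = step q a := rfl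
  rw [h1, h2] at h
  linarith [neg_costSum_le_storage hB q (splice 1 (fun _ => a) x.1) (1 + x.2)]

end ClosedLoop

section ValueIteration

variable {Q U W : Type*} [Fintype U] [Nonempty U] [Fintype W] [Nonempty W]
  (f : Q × U × W → Q) (σ : Q × U × W → ℝ)

lemma dpOp_mono : Monotone (dpOp f σ) := fun _ _ hJ _ =>
  inf'_mono_fun fun _ _ => sup'_mono_fun fun _ _ => add_le_add_right (hJ _) _

lemma dpOp_le_of_feedback (φ : Q → U) {g : Q → ℝ}
    (hg : ∀ q w, -σ (q, φ q, w) + g (f (q, φ q, w)) ≤ g q) : dpOp f σ g ≤ g := fun q =>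
  (inf'_le _ (mem_univ (φ q))).trans (sup'_le _ _ fun w _ => hg q w)

lemma valIter_monotone : Monotone (valIter f σ) := by
  refine monotone_nat_of_le_succ fun k => ?_
  induction k with
  | zero => exact fun q => le_max_left _ _
  | succ k ih => exact fun q => max_le_max le_rfl (dpOp_mono f σ ih q)

lemma valIter_le_of_dpOp_le {g : Q → ℝ} (hg0 : 0 ≤ g) (hg : dpOp f σ g ≤ g) :
    ∀ k, valIter f σ k ≤ g
  | 0 => hg0
  | k + 1 => fun q =>
    max_le (hg0 q) ((dpOp_mono f σ (valIter_le_of_dpOp_le hg0 hg k) q).trans (hg q))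

lemma tendsto_valIter_of_dpOp_le {g : Q → ℝ} (hg0 : 0 ≤ g) (hg : dpOp f σ g ≤ g) :
    ∃ J : Q → ℝ, ∀ q, Tendsto (fun k => valIter f σ k q) atTop (nhds (J q)) :=
  ⟨_, tendsto_pi_nhds.mp <| tendsto_atTop_ciSup (valIter_monotone f σ)
    ⟨g, Set.forall_mem_range.mpr (valIter_le_of_dpOp_le f σ hg0 hg)⟩⟩

end ValueIteration

open ClosedLoop in
theorem stmt_2_general {Q U W : Type*} [Fintype Q] [Fintype U] [Nonempty U]
    [Fintype W] [Nonempty W] (f : Q × U × W → Q) (σ : Q × U × W → ℝ)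
    (h : ∃ φ : Q → U, ∀ q : ℕ → Q, ∀ w : ℕ → W,
      (∀ t : ℕ, q (t + 1) = f (q t, φ (q t), w t)) →
      ∃ C : ℝ, ∀ T : ℕ, C ≤ ∑ t ∈ Finset.range (T + 1), σ (q t, φ (q t), w t)) :
    ∃ Jstar : Q → ℝ, ∀ q : Q,
      Tendsto (fun k => valIter f σ k q) atTop (nhds (Jstar q)) := by
  obtain ⟨φ, hφ⟩ := h
  set step : Q → W → Q := fun q w => f (q, φ q, w)
  set cost : Q → W → ℝ := fun q w => σ (q, φ q, w)
  have hbdd : ∀ q w, BddBelow (Set.range (costSum step cost q w)) := fun q w => by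
    obtain ⟨C, hC⟩ := hφ (traj step q w) w fun t => rfl
    refine ⟨min C 0, Set.forall_mem_range.mpr fun T => ?_⟩
    cases T with
    | zero => simp [costSum]
    | succ T => exact (min_le_left _ _).trans (hC T)
  obtain ⟨B, hB⟩ := exists_forall_le_costSum step cost hbdd
  refine tendsto_valIter_of_dpOp_le f σ (storage_nonneg hB)
    (dpOp_le_of_feedback f σ φ fun q w => ?_)
  linarith [storage_step_le hB q w]

theorem stmt_2 {Q U W : Type*} [Fintype Q] [Nonempty Q] [Fintype U] [Nonempty U]
    [Fintype W] [Nonempty W] (f : Q × U × W → Q) (σ : Q × U × W → ℝ)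
    (h : ∃ φ : Q → U, ∀ q : ℕ → Q, ∀ w : ℕ → W,
      (∀ t : ℕ, q (t + 1) = f (q t, φ (q t), w t)) →
      ∃ C : ℝ, ∀ T : ℕ, C ≤ ∑ t ∈ Finset.range (T + 1), σ (q t, φ (q t), w t)) :
    ∃ Jstar : Q → ℝ, ∀ q : Q,
      Tendsto (fun k => valIter f σ k q) atTop (nhds (Jstar q)) :=
  stmt_2_general f σ h
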